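/- For matrices L, M, N of compatible sizes, the equation L X M = N has a solution X if and only if L L† N M† M = N; moreover, in that case every matrix of the form X = L† N M† + Y − L† L Y M M† (for arbitrary Y of appropriate size) is a solution. -/
import Mathlib


open Matrix

/-- Moore–Penrose conditions: `Ld` is the Moore–Penrose inverse of `L`. -/
def IsMoorePenrose {n m : ℕ} (L : Matrix (Fin n) (Fin m) ℝ)
    (Ld : Matrix (Fin m) (Fin n) ℝ) : Prop :=
  L * Ld * L = L ∧ Ld * L * Ld = Ld ∧ (L * Ld)ᵀ = L * Ld ∧ (Ld * L)ᵀ = Ld * L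

theorem matrix_two_sided_eq_solvable_iff {p q r s : ℕ}
    (L : Matrix (Fin p) (Fin q) ℝ) (Ld : Matrix (Fin q) (Fin p) ℝ)
    (M : Matrix (Fin r) (Fin s) ℝ) (Md : Matrix (Fin s) (Fin r) ℝ)
    (hL : IsMoorePenrose L Ld) (hM : IsMoorePenrose M Md)
    (N : Matrix (Fin p) (Fin s) ℝ) :
    ((∃ X : Matrix (Fin q) (Fin r) ℝ, L * X * M = N) ↔ L * Ld * N * (Md * M) = N)
      ∧ (L * Ld * N * (Md * M) = N →
          ∀ Y : Matrix (Fin q) (Fin r) ℝ,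
            L * (Ld * N * Md + Y - Ld * L * Y * (M * Md)) * M = N) := by
  obtain ⟨hL1, hL2, hL3, hL4⟩ := hL
  obtain ⟨hM1, hM2, hM3, hM4⟩ := hM
  have hL1' : ∀ {t : ℕ} (Z : Matrix (Fin q) (Fin t) ℝ),
      L * (Ld * (L * Z)) = L * Z := by
    intro t Z
    rw [← Matrix.mul_assoc, ← Matrix.mul_assoc, hL1]
  have hM1' : M * (Md * M) = M := by rw [← Matrix.mul_assoc, hM1]
  have key : ∀ Y : Matrix (Fin q) (Fin r) ℝ,
      L * (Ld * N * Md + Y - Ld * L * Y * (M * Md)) * M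
        = L * Ld * N * (Md * M) := by
    intro Y
    simp only [Matrix.add_mul, Matrix.sub_mul, Matrix.mul_add, Matrix.mul_sub,
      Matrix.mul_assoc, hM1', hL1']
    abel
  constructor
  · constructor
    · rintro ⟨X, hX⟩
      calc L * Ld * N * (Md * M) = L * Ld * (L * X * M) * (Md * M) := by rw [hX]
        _ = L * X * M := by
            simp only [Matrix.mul_assoc, hM1', hL1']
        _ = N := hX
    · intro h
      refine ⟨Ld * N * Md, ?_⟩
      rw [← h]
      simp only [Matrix.mul_assoc, hM1', hL1']
  · intro h Y
    rw [key Y, h]
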